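/- arXiv:1502.00152 — 6 statements merged into one kernel-verified Lean document; each statement's English description precedes it below -/
import Mathlib

section
/- Let W be a nonempty set of weighted probability measures on the finite set S, and suppose C(W) is convex. If q ∈ ℝ^S is a subprobability vector (q ≥ 0 pointwise and Σ_{s∈S} q(s) ≤ 1) that does not belong to the closure of C(W), then there exists a vector θ ∈ ℝ^S with θ(s) ≥ 0 for all s such that for every (Pr,α) ∈ W one has Σ_{s∈S} α·Pr(s)·θ(s) < Σ_{s∈S} q(s)·θ(s). -/
open scoped BigOperators

noncomputable section

variable {S : Type*}

/-- `Pr : S → ℝ` is a probability measure on the finite state space `S`. -/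
def IsProb [Fintype S] (Pr : S → ℝ) : Prop :=
  (∀ s, 0 ≤ Pr s) ∧ (∑ s, Pr s) = 1

/-- A set of weighted probability measures: each element is a pair `(Pr, α)` with `Pr`
a probability measure and `α ∈ [0,1]`, with at most one weight per measure. -/
def IsWeightedSet [Fintype S] (W : Set ((S → ℝ) × ℝ)) : Prop :=
  (∀ w ∈ W, IsProb w.1 ∧ w.2 ∈ Set.Icc (0 : ℝ) 1) ∧
    ∀ w ∈ W, ∀ w' ∈ W, w.1 = w'.1 → w.2 = w'.2

/-- The regret of act `f` at state `s` with respect to menu `M`: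
`(max_{g ∈ M} g s) - f s`. -/
def regretAt (M : Finset (S → ℝ)) (f : S → ℝ) (s : S) : ℝ :=
  sSup ((fun g => g s) '' (M : Set (S → ℝ))) - f s

/-- The maximum weighted expected regret of `f` with respect to menu `M` and the
weighted set `W` of probability measures (it is `0` when `W = ∅`, since `sSup ∅ = 0`
for real numbers). -/
def wregret [Fintype S] (W : Set ((S → ℝ) × ℝ)) (M : Finset (S → ℝ)) (f : S → ℝ) : ℝ :=
  sSup {x | ∃ w ∈ W, x = w.2 * ∑ s, w.1 s * regretAt M f s}

/-- `C(P⁺)`: the set of subprobability vectors dominated by some weighted measure in `W`. -/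
def Cset (W : Set ((S → ℝ) × ℝ)) : Set (S → ℝ) :=
  {p | (∀ s, 0 ≤ p s) ∧ ∃ w ∈ W, ∀ s, p s ≤ w.2 * w.1 s}

/-- The probability of the event `E` under `Pr`. -/
def probOf (Pr : S → ℝ) (E : Finset S) : ℝ := ∑ s ∈ E, Pr s

/-- The conditional probability measure `Pr(· | E)`. -/
def condProb [DecidableEq S] (Pr : S → ℝ) (E : Finset S) : S → ℝ :=
  fun s => if s ∈ E then Pr s / probOf Pr E else 0

/-- Prior-by-prior updating: `P⁺|ᵖE = {(Pr|E, α) : (Pr,α) ∈ P⁺, Pr(E) > 0}`. -/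
def updP [DecidableEq S] (W : Set ((S → ℝ) × ℝ)) (E : Finset S) : Set ((S → ℝ) × ℝ) :=
  {w' | ∃ w ∈ W, 0 < probOf w.1 E ∧ w' = (condProb w.1 E, w.2)}

/-- `ūP(E) = sup {α·Pr(E) : (Pr,α) ∈ P⁺}`. -/
def ubar (W : Set ((S → ℝ) × ℝ)) (E : Finset S) : ℝ :=
  sSup {x | ∃ w ∈ W, x = w.2 * probOf w.1 E}

/-- The likelihood-updated weight `αˡ_E` of the measure `Pr|E`:
`sup {α′·Pr′(E)/ūP(E) : (Pr′,α′) ∈ P⁺, Pr′|E = Pr|E}`. -/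
def alphaL [DecidableEq S] (W : Set ((S → ℝ) × ℝ)) (E : Finset S) (Pr : S → ℝ) : ℝ :=
  sSup {x | ∃ w ∈ W, condProb w.1 E = condProb Pr E ∧ x = w.2 * probOf w.1 E / ubar W E}

/-- Likelihood updating: `P⁺|ˡE = {(Pr|E, αˡ_E) : (Pr,α) ∈ P⁺, Pr(E) > 0}`. -/
def updL [DecidableEq S] (W : Set ((S → ℝ) × ℝ)) (E : Finset S) : Set ((S → ℝ) × ℝ) :=
  {w' | ∃ w ∈ W, 0 < probOf w.1 E ∧ w' = (condProb w.1 E, alphaL W E w.1)} 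

/-- The MWER choice set: those `f ∈ M'` minimizing `wregret W M` over `M'`; regret is
computed with respect to the reference menu `M` and beliefs `W`. -/
def choiceSet [Fintype S] (M : Finset (S → ℝ)) (W : Set ((S → ℝ) × ℝ))
    (M' : Finset (S → ℝ)) : Set (S → ℝ) :=
  {f | f ∈ M' ∧ ∀ g ∈ M', wregret W M f ≤ wregret W M g}

/-- The maximum weighted expected value `Ē_{W}(θ) = sup_{(Pr,α) ∈ W} α·Σ_s Pr(s)·θ(s)`. -/
def Ebar [Fintype S] (W : Set ((S → ℝ) × ℝ)) (θ : S → ℝ) : ℝ :=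
  sSup {x | ∃ w ∈ W, x = w.2 * ∑ s, w.1 s * θ s}

/-- Axiom DC-M for the weighted set `W` under the updating rule `upd`. -/
def DCM [Fintype S] [DecidableEq S]
    (upd : Set ((S → ℝ) × ℝ) → Finset S → Set ((S → ℝ) × ℝ))
    (W : Set ((S → ℝ) × ℝ)) : Prop :=
  ∀ (E F : Finset S) (M M' : Finset (S → ℝ)), M.Nonempty → M' ⊆ M →
    ∀ f ∈ M', ∀ g ∈ M',
      f ∈ choiceSet M (upd W (E ∩ F)) M' → f ∈ choiceSet M (upd W (Eᶜ ∩ F)) M' →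
        f ∈ choiceSet M (upd W F) M' ∧
          (g ∉ choiceSet M (upd W (E ∩ F)) M' → g ∉ choiceSet M (upd W F) M')

/-- Separability (SEP) of the weighted regret of `f` with respect to menu `M` and the
weighted set `W`, under the updating rule `upd`. -/
def Separable [Fintype S] [DecidableEq S]
    (upd : Set ((S → ℝ) × ℝ) → Finset S → Set ((S → ℝ) × ℝ))
    (W : Set ((S → ℝ) × ℝ)) (M : Finset (S → ℝ)) (f : S → ℝ) : Prop :=
  ∀ E F : Finset S, 0 < ubar W (E ∩ F) → 0 < ubar W (Eᶜ ∩ F) →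
    (wregret (upd W F) M f =
      sSup {x | ∃ w ∈ upd W F, x =
        w.2 * (probOf w.1 (E ∩ F) * wregret (upd W (E ∩ F)) M f +
          probOf w.1 (Eᶜ ∩ F) * wregret (upd W (Eᶜ ∩ F)) M f)}) ∧
    (wregret (upd W (E ∩ F)) M f ≠ 0 →
      sSup {x | ∃ w ∈ upd W F, x =
        w.2 * probOf w.1 (Eᶜ ∩ F) * wregret (upd W (Eᶜ ∩ F)) M f} <
        wregret (upd W F) M f)

/-- `p`-rectangularity of the weighted set `W` (prior-by-prior updating; the updated
weights equal the original weights). -/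
def pRectangular [Fintype S] [DecidableEq S] (W : Set ((S → ℝ) × ℝ)) : Prop :=
  ∀ E F : Finset S,
    (∀ w₁ ∈ W, ∀ w₂ ∈ W, ∀ w₃ ∈ W,
      0 < probOf w₁.1 (E ∩ F) → 0 < probOf w₂.1 (Eᶜ ∩ F) →
      (fun s => w₃.2 * probOf w₃.1 (E ∩ F) * (w₁.2 * condProb w₁.1 (E ∩ F) s) +
          w₃.2 * probOf w₃.1 (Eᶜ ∩ F) * (w₂.2 * condProb w₂.1 (Eᶜ ∩ F) s)) ∈
        closure (Cset (updP W F))) ∧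
    (∀ δ : ℝ, 0 < δ → 0 < ubar W F →
      ∃ w ∈ updP W F,
        sSup {x | ∃ w' ∈ W, x = w'.2 * probOf w'.1 (Eᶜ ∩ F)} <
          w.2 * (δ * probOf w.1 (E ∩ F) + probOf w.1 (Eᶜ ∩ F))) ∧
    (∀ θ : S → ℝ, (∀ s, 0 ≤ θ s) →
      Ebar (updP W F) θ ≤
        sSup {x | ∃ w ∈ updP W F, x =
          w.2 * (probOf w.1 (E ∩ F) * Ebar (updP W (E ∩ F)) θ +
            probOf w.1 (Eᶜ ∩ F) * Ebar (updP W (Eᶜ ∩ F)) θ)})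

/-- `l`-rectangularity of the weighted set `W` (likelihood updating; the updated
weights are the likelihood-updated weights `αˡ`). -/
def lRectangular [Fintype S] [DecidableEq S] (W : Set ((S → ℝ) × ℝ)) : Prop :=
  ∀ E F : Finset S,
    (∀ w₁ ∈ W, ∀ w₂ ∈ W, ∀ w₃ ∈ W,
      0 < probOf w₁.1 (E ∩ F) → 0 < probOf w₂.1 (Eᶜ ∩ F) →
      (fun s => w₃.2 * probOf w₃.1 (E ∩ F) * (alphaL W (E ∩ F) w₁.1 * condProb w₁.1 (E ∩ F) s) +
          w₃.2 * probOf w₃.1 (Eᶜ ∩ F) * (alphaL W (Eᶜ ∩ F) w₂.1 * condProb w₂.1 (Eᶜ ∩ F) s)) ∈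
        closure (Cset (updL W F))) ∧
    (∀ δ : ℝ, 0 < δ → 0 < ubar W F →
      ∃ w ∈ updL W F,
        sSup {x | ∃ w' ∈ W, x = w'.2 * probOf w'.1 (Eᶜ ∩ F)} <
          w.2 * (δ * probOf w.1 (E ∩ F) + probOf w.1 (Eᶜ ∩ F))) ∧
    (∀ θ : S → ℝ, (∀ s, 0 ≤ θ s) →
      Ebar (updL W F) θ ≤
        sSup {x | ∃ w ∈ updL W F, x =
          w.2 * (probOf w.1 (E ∩ F) * Ebar (updL W (E ∩ F)) θ +
            probOf w.1 (Eᶜ ∩ F) * Ebar (updL W (Eᶜ ∩ F)) θ)})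

/-- separating-hyperplane lemma.  If `C(W)` is convex and the
subprobability vector `q` is not in the closure of `C(W)`, there is a pointwise
nonnegative `θ` with `Σ α·Pr(s)·θ(s) < Σ q(s)·θ(s)` for all `(Pr,α) ∈ W`. -/
theorem stmt_1 [Fintype S] [Nonempty S]
    (W : Set ((S → ℝ) × ℝ)) (hW : IsWeightedSet W) (hWne : W.Nonempty)
    (hconv : Convex ℝ (Cset W))
    (q : S → ℝ) (hq0 : ∀ s, 0 ≤ q s) (hq1 : (∑ s, q s) ≤ 1)
    (hq : q ∉ closure (Cset W)) :
    ∃ θ : S → ℝ, (∀ s, 0 ≤ θ s) ∧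
      ∀ w ∈ W, (∑ s, w.2 * w.1 s * θ s) < ∑ s, q s * θ s := by
  classical
  obtain ⟨f, u, hfs, hfq⟩ :=
    geometric_hahn_banach_closed_point (s := closure (Cset W)) (x := q)
      hconv.closure isClosed_closure hq
  set θ₀ : S → ℝ := fun s => f (Pi.single s (1:ℝ)) with hθ₀
  have hrep : ∀ p : S → ℝ, f p = ∑ s, p s * θ₀ s := by
    intro p
    have hp : p = ∑ s, (p s) • (Pi.single s (1 : ℝ) : S → ℝ) := by
      ext t
      simp [Finset.sum_apply, Pi.single_apply]
    calc f p = f (∑ s, (p s) • (Pi.single s (1 : ℝ) : S → ℝ)) := by rw [← hp]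
      _ = ∑ s, p s * θ₀ s := by
        rw [map_sum]; simp [hθ₀, smul_eq_mul]
  refine ⟨fun s => max (θ₀ s) 0, fun s => le_max_right _ _, ?_⟩
  intro w hw
  obtain ⟨⟨hPr0, _⟩, hα0, _⟩ := hW.1 w hw
  -- the truncated point
  set p' : S → ℝ := fun s => if 0 ≤ θ₀ s then w.2 * w.1 s else 0 with hp'
  have hp'mem : p' ∈ Cset W := by
    refine ⟨fun s => ?_, w, hw, fun s => ?_⟩
    · by_cases h : 0 ≤ θ₀ s <;> simp [hp', h, mul_nonneg hα0 (hPr0 s)]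
    · by_cases h : 0 ≤ θ₀ s <;> simp [hp', h, mul_nonneg hα0 (hPr0 s)]
  have h1 : f p' < u := hfs _ (subset_closure hp'mem)
  have h2 : f p' = ∑ s, w.2 * w.1 s * max (θ₀ s) 0 := by
    rw [hrep]
    refine Finset.sum_congr rfl fun s _ => ?_
    by_cases h : 0 ≤ θ₀ s
    · simp [hp', h, max_eq_left h]
    · simp [hp', h, max_eq_right (le_of_not_ge h)]
  have h3 : f q ≤ ∑ s, q s * max (θ₀ s) 0 := by
    rw [hrep]
    exact Finset.sum_le_sum fun s _ =>
      mul_le_mul_of_nonneg_left (le_max_left _ _) (hq0 s)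
  calc ∑ s, w.2 * w.1 s * max (θ₀ s) 0 = f p' := h2.symm
    _ < u := h1
    _ < f q := hfq
    _ ≤ _ := h3
end
end

section
/- MWER satisfies the Conditional Preference axiom: for each updating rule χ ∈ {p, l}, each event E ⊆ S, each menu M, and all acts f, g ∈ M with f(s) = g(s) for every s ∈ E, one has regret_M^{P⁺|^χE}(f) = regret_M^{P⁺|^χE}(g); consequently, for every menu M′ ⊆ M containing both f and g, f ∈ C_M^{P⁺|^χE}(M′) if and only if g ∈ C_M^{P⁺|^χE}(M′). -/
open scoped BigOperators

noncomputable section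

variable {S : Type*}

/-- MWER satisfies Conditional Preference for both updating rules
`χ ∈ {p, l}`: if `f` and `g` agree on every state of `E`, their updated weighted
expected regrets coincide, and hence `f` is chosen iff `g` is chosen. -/
theorem stmt_3 [Fintype S] [Nonempty S] [DecidableEq S]
    (W : Set ((S → ℝ) × ℝ)) (hW : IsWeightedSet W)
    (upd : Set ((S → ℝ) × ℝ) → Finset S → Set ((S → ℝ) × ℝ))
    (hupd : upd = updP ∨ upd = updL)
    (E : Finset S) (M : Finset (S → ℝ)) (hM : M.Nonempty)
    (f g : S → ℝ) (hf : f ∈ M) (hg : g ∈ M)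
    (hfg : ∀ s ∈ E, f s = g s) :
    wregret (upd W E) M f = wregret (upd W E) M g ∧
      ∀ M' : Finset (S → ℝ), M' ⊆ M → f ∈ M' → g ∈ M' →
        (f ∈ choiceSet M (upd W E) M' ↔ g ∈ choiceSet M (upd W E) M') := by
  have hsupp : ∀ w' ∈ upd W E, ∀ s, s ∉ E → w'.1 s = 0 := by
    intro w' hw' s hs
    rcases hupd with h | h <;> subst h <;>
      · obtain ⟨w, _, _, rfl⟩ := hw'
        simp [condProb, hs]
  have hkey : wregret (upd W E) M f = wregret (upd W E) M g := by
    unfold wregret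
    congr 1
    ext x
    constructor <;> rintro ⟨w, hw, rfl⟩ <;> refine ⟨w, hw, ?_⟩ <;>
      · congr 1
        apply Finset.sum_congr rfl
        intro s _
        by_cases hs : s ∈ E
        · simp [regretAt, hfg s hs]
        · simp [hsupp w hw s hs]
  refine ⟨hkey, fun M' _ hfM' hgM' => ?_⟩
  constructor <;> rintro ⟨_, hmin⟩
  · exact ⟨hgM', fun h hh => hkey ▸ hmin h hh⟩
  · exact ⟨hfM', fun h hh => hkey ▸ hmin h hh⟩
end
end

section
/- No preference reversal from the four axioms: let C_{M,E} be a family of choice functions (for each menu M and each nonempty event E ⊆ S, C_{M,E} maps each nonempty submenu M′ ⊆ M to a subset of M′) satisfying: (Axiom 1, DC-M) for all events E, F ⊆ S and all f, g ∈ M′: if f ∈ C_{M,E∩F}(M′) and f ∈ C_{M,Eᶜ∩F}(M′) then f ∈ C_{M,F}(M′), and if moreover g ∉ C_{M,E∩F}(M′) then g ∉ C_{M,F}(M′); (Axiom 2, Conditional Preference) if f(s) = g(s) for all s ∈ E, then f ∈ C_{M,E}(M′) iff g ∈ C_{M,E}(M′); (Axiom 3) C_{M,E}(M′) ⊆ M′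 and C_{M,E}(M′) ≠ ∅ whenever M′ ≠ ∅; (Axiom 4, Sen's α) if f ∈ C_{M,E}(M′), M″ ⊆ M′, and f ∈ M″, then f ∈ C_{M,E}(M″). Fix a menu M, nonempty events E′ ⊆ E ⊆ S, and a submenu M′ ⊆ M that is closed under E′-splicing, i.e., for all f, g ∈ M′ the act equal to f on E′ and to g on S∖E′ belongs to M′. Then for every act f: if f ∈ C_{M,E}(M) and f ∈ M′, then f ∈ C_{M,E′}(M′). -/
open scoped BigOperators

noncomputable section

variable {S : Type*}

/-- no preference reversal from the four axioms.  `C M E M'` is the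
choice from the submenu `M'` of the menu `M` when the DM considers the states in `E`
possible.  Under DC-M, Conditional Preference, nonemptiness, and Sen's α, if `f` is
chosen from `M` at `E`, `E' ⊆ E`, `M' ⊆ M` is closed under `E'`-splicing, and
`f ∈ M'`, then `f` is chosen from `M'` at `E'`. -/
theorem stmt_4 [Fintype S] [Nonempty S] [DecidableEq S]
    (C : Finset (S → ℝ) → Finset S → Finset (S → ℝ) → Set (S → ℝ))
    (ax1 : ∀ (M : Finset (S → ℝ)) (E F : Finset S) (M' : Finset (S → ℝ)),
      M' ⊆ M → ∀ f ∈ M', ∀ g ∈ M',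
        f ∈ C M (E ∩ F) M' → f ∈ C M (Eᶜ ∩ F) M' →
          f ∈ C M F M' ∧ (g ∉ C M (E ∩ F) M' → g ∉ C M F M'))
    (ax2 : ∀ (M : Finset (S → ℝ)) (E : Finset S) (M' : Finset (S → ℝ)),
      M' ⊆ M → ∀ f ∈ M', ∀ g ∈ M', (∀ s ∈ E, f s = g s) →
        (f ∈ C M E M' ↔ g ∈ C M E M'))
    (ax3 : ∀ (M : Finset (S → ℝ)) (E : Finset S) (M' : Finset (S → ℝ)),
      M' ⊆ M → C M E M' ⊆ (M' : Set (S → ℝ)) ∧ (M'.Nonempty → (C M E M').Nonempty))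
    (ax4 : ∀ (M : Finset (S → ℝ)) (E : Finset S) (M' M'' : Finset (S → ℝ)),
      M' ⊆ M → M'' ⊆ M' → ∀ f ∈ M'', f ∈ C M E M' → f ∈ C M E M'')
    (M M' : Finset (S → ℝ)) (hM : M.Nonempty) (hM' : M'.Nonempty) (hM'M : M' ⊆ M)
    (E E' : Finset S) (hE' : E'.Nonempty) (hE'E : E' ⊆ E)
    (hsplice : ∀ f ∈ M', ∀ g ∈ M', (fun s => if s ∈ E' then f s else g s) ∈ M')
    (f : S → ℝ) (hfC : f ∈ C M E M) (hfM' : f ∈ M') :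
    f ∈ C M E' M' := by
  -- f is chosen from M' at E by Sen's α
  have hfM'E : f ∈ C M E M' := ax4 M E M M' (le_refl M) hM'M f hfM' hfC
  -- pick g chosen from M' at E', h chosen from M' at E'ᶜ ∩ E
  obtain ⟨g, hg⟩ := (ax3 M E' M' hM'M).2 hM'
  obtain ⟨h, hh⟩ := (ax3 M (E'ᶜ ∩ E) M' hM'M).2 hM'
  have hgM' : g ∈ M' := (ax3 M E' M' hM'M).1 hg
  have hhM' : h ∈ M' := (ax3 M (E'ᶜ ∩ E) M' hM'M).1 hh
  -- splice k = g on E', h off E'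
  set k : S → ℝ := fun s => if s ∈ E' then g s else h s with hk
  have hkM' : k ∈ M' := hsplice g hgM' h hhM'
  have hkE' : k ∈ C M E' M' := by
    have := ax2 M E' M' hM'M k hkM' g hgM' (fun s hs => by simp [hk, hs])
    exact this.mpr hg
  have hkE'c : k ∈ C M (E'ᶜ ∩ E) M' := by
    have := ax2 M (E'ᶜ ∩ E) M' hM'M k hkM' h hhM' (fun s hs => by
      have : s ∉ E' := (Finset.mem_inter.mp hs).1 |> (by simpa using ·)
      simp [hk, this])
    exact this.mpr hh
  have hinter : E' ∩ E = E' := Finset.inter_eq_left.mpr hE'E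
  have hkinter : k ∈ C M (E' ∩ E) M' := by rwa [hinter]
  have := ax1 M E' E M' hM'M k hkM' f hfM' hkinter hkE'c
  by_contra hf
  exact this.2 (by rwa [hinter]) hfM'E
end
end

section
/- Characterization of dynamic consistency for MWER under likelihood updating (Theorem 2, χ = l): let P⁺ be a set of weighted probability measures on S such that C(P⁺) is closed. Then Axiom DC-M holds for P⁺ under likelihood updating if and only if, for every menu M and every act f ∈ M, the weighted regret of f with respect to M and P⁺ is separable under likelihood updating. -/
open scoped BigOperators

noncomputable section

variable {S : Type*}

/-! ### Auxiliary material for the proof of `stmt_6` -/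

section Stmt6Aux
set_option linter.unusedSectionVars false

variable {S : Type*} [Fintype S] [DecidableEq S]

lemma sSup_eq_zero_of_subset_zero {X : Set ℝ} (h : X ⊆ {0}) : sSup X = 0 := by
  rcases X.eq_empty_or_nonempty with hX | ⟨x, hx⟩
  · simp [hX]
  · have hx0 : x = 0 := h hx
    apply le_antisymm
    · exact csSup_le ⟨x, hx⟩ fun y hy => le_of_eq (h hy)
    · rw [← hx0]
      exact le_csSup ⟨0, fun y hy => le_of_eq (h hy)⟩ hx

lemma exists_pos_of_sSup_pos {X : Set ℝ} (h : 0 < sSup X) : ∃ x ∈ X, 0 < x := by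
  by_contra hc
  push_neg at hc
  rcases X.eq_empty_or_nonempty with hX | hne
  · rw [hX, Real.sSup_empty] at h; exact lt_irrefl _ h
  · exact absurd (csSup_le hne hc) (not_le.mpr h)

lemma sSup_mul_le {Z : Set ℝ} (hne : Z.Nonempty) {c K : ℝ} (hc : 0 ≤ c)
    (h : ∀ z ∈ Z, z * c ≤ K) : sSup Z * c ≤ K := by
  rcases eq_or_lt_of_le hc with h0 | h0
  · obtain ⟨z, hz⟩ := hne
    have hK := h z hz
    rw [← h0] at hK ⊢
    simpa using hK
  · have h1 : sSup Z ≤ K / c := csSup_le hne fun z hz => (le_div_iff₀ h0).mpr (h z hz)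
    calc sSup Z * c ≤ (K / c) * c := mul_le_mul_of_nonneg_right h1 hc
      _ = K := div_mul_cancel₀ _ h0.ne'

lemma probOf_nonneg {Pr : S → ℝ} (h : ∀ s, 0 ≤ Pr s) (A : Finset S) : 0 ≤ probOf Pr A :=
  Finset.sum_nonneg fun s _ => h s

lemma probOf_mono {Pr : S → ℝ} (h : ∀ s, 0 ≤ Pr s) {A B : Finset S} (hAB : A ⊆ B) :
    probOf Pr A ≤ probOf Pr B :=
  Finset.sum_le_sum_of_subset_of_nonneg hAB fun s _ _ => h s

lemma probOf_eq_zero_mem {Pr : S → ℝ} (h : ∀ s, 0 ≤ Pr s) {A : Finset S}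
    (h0 : probOf Pr A ≤ 0) {s : S} (hs : s ∈ A) : Pr s = 0 := by
  have h1 : probOf Pr A = 0 := le_antisymm h0 (probOf_nonneg h A)
  exact (Finset.sum_eq_zero_iff_of_nonneg fun t _ => h t).mp h1 s hs

/-- A convenient regularity predicate for weighted sets (also satisfied by updated sets). -/
def Tame (W' : Set ((S → ℝ) × ℝ)) : Prop :=
  ∀ w ∈ W', (0 ≤ w.2 ∧ w.2 ≤ 1) ∧ (∀ s, 0 ≤ w.1 s) ∧ (∑ s, w.1 s) ≤ 1

lemma tame_of_weighted {W : Set ((S → ℝ) × ℝ)} (hW : IsWeightedSet W) : Tame W := by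
  intro w hw
  obtain ⟨⟨h1, h2⟩, h3⟩ := hW.1 w hw
  exact ⟨⟨h3.1, h3.2⟩, h1, le_of_eq h2⟩

lemma tame_fst_le_one {W' : Set ((S → ℝ) × ℝ)} (hT : Tame W') {w} (hw : w ∈ W') (s : S) :
    w.1 s ≤ 1 :=
  le_trans (Finset.single_le_sum (fun t _ => (hT w hw).2.1 t) (Finset.mem_univ s)) (hT w hw).2.2

lemma tame_probOf_le_one {W' : Set ((S → ℝ) × ℝ)} (hT : Tame W') {w} (hw : w ∈ W')
    (A : Finset S) : probOf w.1 A ≤ 1 :=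
  le_trans (probOf_mono (hT w hw).2.1 (Finset.subset_univ A)) (hT w hw).2.2

/-- The set whose supremum is `ubar W A`. -/
lemma ubar_set_bounds {W : Set ((S → ℝ) × ℝ)} (hT : Tame W) (A : Finset S) :
    ∀ x ∈ {x | ∃ w ∈ W, x = w.2 * probOf w.1 A}, 0 ≤ x ∧ x ≤ 1 := by
  rintro x ⟨w, hw, rfl⟩
  obtain ⟨⟨ha0, ha1⟩, hq, hqs⟩ := hT w hw
  refine ⟨mul_nonneg ha0 (probOf_nonneg hq A), ?_⟩
  calc w.2 * probOf w.1 A ≤ 1 * 1 :=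
        mul_le_mul ha1 (tame_probOf_le_one hT hw A) (probOf_nonneg hq A) zero_le_one
    _ = 1 := one_mul 1

lemma ubar_bddAbove {W : Set ((S → ℝ) × ℝ)} (hT : Tame W) (A : Finset S) :
    BddAbove {x | ∃ w ∈ W, x = w.2 * probOf w.1 A} :=
  ⟨1, fun x hx => (ubar_set_bounds hT A x hx).2⟩

lemma le_ubar {W : Set ((S → ℝ) × ℝ)} (hT : Tame W) {w} (hw : w ∈ W) (A : Finset S) :
    w.2 * probOf w.1 A ≤ ubar W A :=
  le_csSup (ubar_bddAbove hT A) ⟨w, hw, rfl⟩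

lemma ubar_nonneg {W : Set ((S → ℝ) × ℝ)} (hT : Tame W) (A : Finset S) : 0 ≤ ubar W A := by
  unfold ubar
  exact Real.sSup_nonneg fun x hx => (ubar_set_bounds hT A x hx).1

lemma ubar_mono {W : Set ((S → ℝ) × ℝ)} (hT : Tame W) {A B : Finset S} (hAB : A ⊆ B) :
    ubar W A ≤ ubar W B := by
  rcases W.eq_empty_or_nonempty with hE | ⟨w₀, hw₀⟩
  · unfold ubar; simp [hE]
  · unfold ubar
    refine csSup_le ⟨w₀.2 * probOf w₀.1 A, ⟨w₀, hw₀, rfl⟩⟩ ?_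
    rintro x ⟨w, hw, rfl⟩
    calc w.2 * probOf w.1 A ≤ w.2 * probOf w.1 B :=
          mul_le_mul_of_nonneg_left (probOf_mono (hT w hw).2.1 hAB) (hT w hw).1.1
      _ ≤ ubar W B := le_ubar hT hw B

lemma ubar_pos_elim {W : Set ((S → ℝ) × ℝ)} (hT : Tame W) {A : Finset S}
    (h : 0 < ubar W A) : ∃ w ∈ W, 0 < probOf w.1 A := by
  obtain ⟨x, ⟨w, hw, rfl⟩, hxpos⟩ := exists_pos_of_sSup_pos h
  refine ⟨w, hw, ?_⟩
  by_contra hP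
  push_neg at hP
  exact absurd (mul_nonpos_of_nonneg_of_nonpos (hT w hw).1.1 hP) (not_le.mpr hxpos)

lemma condProb_nonneg {Pr : S → ℝ} (h : ∀ s, 0 ≤ Pr s) (F : Finset S) (s : S) :
    0 ≤ condProb Pr F s := by
  unfold condProb
  split
  · exact div_nonneg (h s) (probOf_nonneg h F)
  · exact le_refl 0

lemma condProb_sum {Pr : S → ℝ} (hF : 0 < probOf Pr F) :
    ∑ s, condProb Pr F s = 1 := by
  unfold condProb
  rw [Finset.sum_ite_mem, Finset.univ_inter, ← Finset.sum_div]
  exact div_self hF.ne'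

lemma alphaL_set_bounds {W : Set ((S → ℝ) × ℝ)} (hT : Tame W) (F : Finset S) (Pr : S → ℝ) :
    ∀ x ∈ {x | ∃ w ∈ W, condProb w.1 F = condProb Pr F ∧ x = w.2 * probOf w.1 F / ubar W F},
      0 ≤ x ∧ x ≤ 1 := by
  rintro x ⟨w, hw, _, rfl⟩
  constructor
  · exact div_nonneg (mul_nonneg (hT w hw).1.1 (probOf_nonneg (hT w hw).2.1 F)) (ubar_nonneg hT F)
  · rcases eq_or_lt_of_le (ubar_nonneg hT F) with h0 | h0
    · rw [← h0, div_zero]; exact zero_le_one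
    · exact (div_le_one h0).mpr (le_ubar hT hw F)

lemma alphaL_nonneg {W : Set ((S → ℝ) × ℝ)} (hT : Tame W) (F : Finset S) (Pr : S → ℝ) :
    0 ≤ alphaL W F Pr := by
  unfold alphaL
  exact Real.sSup_nonneg fun x hx => (alphaL_set_bounds hT F Pr x hx).1

lemma alphaL_le_one {W : Set ((S → ℝ) × ℝ)} (hT : Tame W) (F : Finset S) (Pr : S → ℝ) :
    alphaL W F Pr ≤ 1 := by
  unfold alphaL
  rcases Set.eq_empty_or_nonempty
      {x | ∃ w ∈ W, condProb w.1 F = condProb Pr F ∧ x = w.2 * probOf w.1 F / ubar W F}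
    with hE | hne
  · rw [hE, Real.sSup_empty]; exact zero_le_one
  · exact csSup_le hne fun x hx => (alphaL_set_bounds hT F Pr x hx).2

lemma alphaL_bddAbove {W : Set ((S → ℝ) × ℝ)} (hT : Tame W) (F : Finset S) (Pr : S → ℝ) :
    BddAbove {x | ∃ w ∈ W, condProb w.1 F = condProb Pr F ∧ x = w.2 * probOf w.1 F / ubar W F} :=
  ⟨1, fun x hx => (alphaL_set_bounds hT F Pr x hx).2⟩

lemma tame_updL {W : Set ((S → ℝ) × ℝ)} (hT : Tame W) (F : Finset S) : Tame (updL W F) := by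
  rintro w' ⟨w, hw, hPF, rfl⟩
  refine ⟨⟨alphaL_nonneg hT F w.1, alphaL_le_one hT F w.1⟩,
    condProb_nonneg (hT w hw).2.1 F, ?_⟩
  rw [condProb_sum hPF]

lemma updL_nonempty {W : Set ((S → ℝ) × ℝ)} (hT : Tame W) {F : Finset S}
    (hF : 0 < ubar W F) : (updL W F).Nonempty := by
  obtain ⟨w, hw, hP⟩ := ubar_pos_elim hT hF
  exact ⟨_, w, hw, hP, rfl⟩


/-- The set whose supremum is `Ebar W' θ`. -/
def ES (W' : Set ((S → ℝ) × ℝ)) (θ : S → ℝ) : Set ℝ :=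
  {x | ∃ w ∈ W', x = w.2 * ∑ s, w.1 s * θ s}

lemma Ebar_eq_sSup_ES (W' : Set ((S → ℝ) × ℝ)) (θ : S → ℝ) : Ebar W' θ = sSup (ES W' θ) := rfl

lemma wregret_eq_Ebar (W' : Set ((S → ℝ) × ℝ)) (M : Finset (S → ℝ)) (f : S → ℝ) :
    wregret W' M f = Ebar W' (regretAt M f) := rfl

lemma ES_le_bound {W' : Set ((S → ℝ) × ℝ)} (hT : Tame W') (θ : S → ℝ) :
    ∀ x ∈ ES W' θ, x ≤ ∑ s, |θ s| := by
  rintro x ⟨w, hw, rfl⟩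
  obtain ⟨⟨ha0, ha1⟩, hq, _⟩ := hT w hw
  have ht : ∑ s, w.1 s * θ s ≤ ∑ s, |θ s| := by
    apply Finset.sum_le_sum
    intro s _
    calc w.1 s * θ s ≤ w.1 s * |θ s| := mul_le_mul_of_nonneg_left (le_abs_self _) (hq s)
      _ ≤ 1 * |θ s| := mul_le_mul_of_nonneg_right (tame_fst_le_one hT hw s) (abs_nonneg _)
      _ = |θ s| := one_mul _
  rcases le_or_gt 0 (∑ s, w.1 s * θ s) with h | h
  · calc w.2 * ∑ s, w.1 s * θ s ≤ 1 * ∑ s, w.1 s * θ s := mul_le_mul_of_nonneg_right ha1 h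
      _ = ∑ s, w.1 s * θ s := one_mul _
      _ ≤ _ := ht
  · calc w.2 * ∑ s, w.1 s * θ s ≤ 0 := mul_nonpos_of_nonneg_of_nonpos ha0 h.le
      _ ≤ ∑ s, |θ s| := Finset.sum_nonneg fun s _ => abs_nonneg _

lemma ES_bddAbove {W' : Set ((S → ℝ) × ℝ)} (hT : Tame W') (θ : S → ℝ) :
    BddAbove (ES W' θ) :=
  ⟨∑ s, |θ s|, fun x hx => ES_le_bound hT θ x hx⟩

lemma ES_nonneg {W' : Set ((S → ℝ) × ℝ)} (hT : Tame W') {θ : S → ℝ} (hθ : ∀ s, 0 ≤ θ s) :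
    ∀ x ∈ ES W' θ, 0 ≤ x := by
  rintro x ⟨w, hw, rfl⟩
  exact mul_nonneg (hT w hw).1.1
    (Finset.sum_nonneg fun s _ => mul_nonneg ((hT w hw).2.1 s) (hθ s))

lemma Ebar_nonneg {W' : Set ((S → ℝ) × ℝ)} (hT : Tame W') {θ : S → ℝ} (hθ : ∀ s, 0 ≤ θ s) :
    0 ≤ Ebar W' θ :=
  Real.sSup_nonneg (ES_nonneg hT hθ)

lemma Ebar_congr {W' : Set ((S → ℝ) × ℝ)} {θ θ' : S → ℝ}
    (h : ∀ w ∈ W', w.2 * ∑ s, w.1 s * θ s = w.2 * ∑ s, w.1 s * θ' s) :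
    Ebar W' θ = Ebar W' θ' := by
  unfold Ebar
  congr 1
  ext x
  constructor
  · rintro ⟨w, hw, rfl⟩; exact ⟨w, hw, h w hw⟩
  · rintro ⟨w, hw, rfl⟩; exact ⟨w, hw, (h w hw).symm⟩

lemma sum_single_ite (q : S → ℝ) (B : Finset S) (c : ℝ) :
    ∑ s, q s * (if s ∈ B then c else 0) = probOf q B * c := by
  have h1 : ∀ s, q s * (if s ∈ B then c else 0) = if s ∈ B then q s * c else 0 := by
    intro s; by_cases hs : s ∈ B <;> simp [hs]
  rw [Finset.sum_congr rfl fun s _ => h1 s, Finset.sum_ite_mem, Finset.univ_inter,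
    ← Finset.sum_mul]
  rfl

lemma sum_pair_ite {A B : Finset S} (hd : ∀ s, ¬(s ∈ A ∧ s ∈ B)) (q : S → ℝ) (c₁ c₂ : ℝ) :
    ∑ s, q s * (if s ∈ A then c₁ else if s ∈ B then c₂ else 0)
      = probOf q A * c₁ + probOf q B * c₂ := by
  have h1 : ∀ s, q s * (if s ∈ A then c₁ else if s ∈ B then c₂ else 0)
      = q s * (if s ∈ A then c₁ else 0) + q s * (if s ∈ B then c₂ else 0) := by
    intro s
    by_cases hA : s ∈ A
    · have hB : s ∉ B := fun hB => hd s ⟨hA, hB⟩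
      simp [hA, hB]
    · by_cases hB : s ∈ B <;> simp [hA, hB]
  rw [Finset.sum_congr rfl fun s _ => h1 s, Finset.sum_add_distrib,
    sum_single_ite, sum_single_ite]

/-- The "pair" value set appearing in SEP (i). -/
def PS (W' : Set ((S → ℝ) × ℝ)) (A B : Finset S) (c₁ c₂ : ℝ) : Set ℝ :=
  {x | ∃ w ∈ W', x = w.2 * (probOf w.1 A * c₁ + probOf w.1 B * c₂)}

/-- The "single" value set appearing in SEP (ii). -/
def SS (W' : Set ((S → ℝ) × ℝ)) (B : Finset S) (c : ℝ) : Set ℝ :=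
  {x | ∃ w ∈ W', x = w.2 * probOf w.1 B * c}

lemma PS_eq_ES {W' : Set ((S → ℝ) × ℝ)} {A B : Finset S} (hd : ∀ s, ¬(s ∈ A ∧ s ∈ B))
    (c₁ c₂ : ℝ) :
    PS W' A B c₁ c₂ = ES W' (fun s => if s ∈ A then c₁ else if s ∈ B then c₂ else 0) := by
  ext x
  constructor
  · rintro ⟨w, hw, rfl⟩; exact ⟨w, hw, by rw [sum_pair_ite hd]⟩
  · rintro ⟨w, hw, rfl⟩; exact ⟨w, hw, by rw [sum_pair_ite hd]⟩

lemma SS_eq_ES {W' : Set ((S → ℝ) × ℝ)} (B : Finset S) (c : ℝ) :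
    SS W' B c = ES W' (fun s => if s ∈ B then c else 0) := by
  ext x
  constructor
  · rintro ⟨w, hw, rfl⟩; exact ⟨w, hw, by rw [sum_single_ite, mul_assoc]⟩
  · rintro ⟨w, hw, rfl⟩; exact ⟨w, hw, by rw [sum_single_ite, mul_assoc]⟩

/-- Key conditional-probability identity for likelihood updating. -/
lemma cond_mul_eq {Pr Pr' : S → ℝ} (hPr' : ∀ s, 0 ≤ Pr' s) {F : Finset S}
    (h : condProb Pr' F = condProb Pr F) (s : S) :
    probOf Pr' F * condProb Pr F s = if s ∈ F then Pr' s else 0 := by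
  by_cases hs : s ∈ F
  · have hcs := congrFun h s
    simp only [condProb, if_pos hs] at hcs ⊢
    rcases eq_or_lt_of_le (probOf_nonneg hPr' F) with h0 | h0
    · rw [← h0, zero_mul]
      exact (probOf_eq_zero_mem hPr' (le_of_eq h0.symm) hs).symm
    · rw [← hcs, mul_comm, div_mul_cancel₀ _ h0.ne']
  · simp [condProb, hs]

/-- Main computation: the weighted expected value w.r.t. the likelihood-updated set. -/
lemma Ebar_updL {W : Set ((S → ℝ) × ℝ)} (hT : Tame W) {F : Finset S} (hF : 0 < ubar W F)
    {r : S → ℝ} (hr : ∀ s, 0 ≤ r s) :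
    Ebar (updL W F) r = Ebar W (fun s => if s ∈ F then r s else 0) / ubar W F := by
  have hTu : Tame (updL W F) := tame_updL hT F
  obtain ⟨w₀, hw₀, hP₀⟩ := ubar_pos_elim hT hF
  have hXne : (ES (updL W F) r).Nonempty :=
    ⟨_, ⟨(condProb w₀.1 F, alphaL W F w₀.1), ⟨w₀, hw₀, hP₀, rfl⟩, rfl⟩⟩
  have hYne : (ES W fun s => if s ∈ F then r s else 0).Nonempty := ⟨_, ⟨w₀, hw₀, rfl⟩⟩
  have hYb : BddAbove (ES W fun s => if s ∈ F then r s else 0) := ES_bddAbove hT _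
  have hXb : BddAbove (ES (updL W F) r) := ES_bddAbove hTu _
  have hX0 : 0 ≤ sSup (ES (updL W F) r) := Real.sSup_nonneg (ES_nonneg hTu hr)
  rw [Ebar_eq_sSup_ES, Ebar_eq_sSup_ES]
  apply le_antisymm
  · apply csSup_le hXne
    rintro x ⟨w', ⟨w, hw, hPF, rfl⟩, rfl⟩
    set c := ∑ s, condProb w.1 F s * r s with hc
    have hc0 : 0 ≤ c :=
      Finset.sum_nonneg fun s _ => mul_nonneg (condProb_nonneg (hT w hw).2.1 F s) (hr s)
    show alphaL W F w.1 * c ≤ _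
    have hZne : {x | ∃ w' ∈ W, condProb w'.1 F = condProb w.1 F ∧
        x = w'.2 * probOf w'.1 F / ubar W F}.Nonempty := ⟨_, w, hw, rfl, rfl⟩
    unfold alphaL
    apply sSup_mul_le hZne hc0
    rintro z ⟨w', hw', hcond, rfl⟩
    have hkey : probOf w'.1 F * c = ∑ s, w'.1 s * (if s ∈ F then r s else 0) := by
      rw [hc, Finset.mul_sum]
      apply Finset.sum_congr rfl
      intro s _
      rw [← mul_assoc, cond_mul_eq (hT w' hw').2.1 hcond s]
      by_cases hs : s ∈ F <;> simp [hs]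
    have hmemY : w'.2 * ∑ s, w'.1 s * (if s ∈ F then r s else 0)
        ∈ ES W fun s => if s ∈ F then r s else 0 := ⟨w', hw', rfl⟩
    calc w'.2 * probOf w'.1 F / ubar W F * c
        = w'.2 * (probOf w'.1 F * c) / ubar W F := by ring
      _ = w'.2 * (∑ s, w'.1 s * (if s ∈ F then r s else 0)) / ubar W F := by rw [hkey]
      _ ≤ _ / ubar W F := by
          gcongr
          exact le_csSup hYb hmemY
  · rw [div_le_iff₀ hF]
    apply csSup_le hYne
    rintro y ⟨w, hw, rfl⟩
    rcases le_or_gt (probOf w.1 F) 0 with hPF | hPF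
    · have hy0 : w.2 * ∑ s, w.1 s * (if s ∈ F then r s else 0) = 0 := by
        rw [Finset.sum_eq_zero, mul_zero]
        intro s _
        by_cases hs : s ∈ F
        · rw [probOf_eq_zero_mem (hT w hw).2.1 hPF hs, zero_mul]
        · simp [hs]
      rw [hy0]
      exact mul_nonneg hX0 hF.le
    · have hmem : (condProb w.1 F, alphaL W F w.1) ∈ updL W F := ⟨w, hw, hPF, rfl⟩
      set c := ∑ s, condProb w.1 F s * r s with hc
      have hc0 : 0 ≤ c :=
        Finset.sum_nonneg fun s _ => mul_nonneg (condProb_nonneg (hT w hw).2.1 F s) (hr s)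
      have hxX : alphaL W F w.1 * c ∈ ES (updL W F) r := ⟨_, hmem, rfl⟩
      have h1 : ∑ s, w.1 s * (if s ∈ F then r s else 0) = probOf w.1 F * c := by
        rw [hc, Finset.mul_sum]
        apply Finset.sum_congr rfl
        intro s _
        rw [← mul_assoc, cond_mul_eq (hT w hw).2.1 rfl s]
        by_cases hs : s ∈ F <;> simp [hs]
      have h2 : w.2 * probOf w.1 F / ubar W F ≤ alphaL W F w.1 :=
        le_csSup (alphaL_bddAbove hT F w.1) ⟨w, hw, rfl, rfl⟩
      have h3 : w.2 * probOf w.1 F ≤ alphaL W F w.1 * ubar W F := by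
        rw [← div_le_iff₀ hF]; exact h2
      calc w.2 * ∑ s, w.1 s * (if s ∈ F then r s else 0)
          = (w.2 * probOf w.1 F) * c := by rw [h1]; ring
        _ ≤ (alphaL W F w.1 * ubar W F) * c := mul_le_mul_of_nonneg_right h3 hc0
        _ = (alphaL W F w.1 * c) * ubar W F := by ring
        _ ≤ sSup (ES (updL W F) r) * ubar W F :=
            mul_le_mul_of_nonneg_right (le_csSup hXb hxX) hF.le

/-- `Ebar` of an indicator-type function. -/
lemma Ebar_ite {W : Set ((S → ℝ) × ℝ)} (hT : Tame W) (A : Finset S) {c : ℝ} (hc : 0 ≤ c) :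
    Ebar W (fun s => if s ∈ A then c else 0) = c * ubar W A := by
  have hval : ∀ w : (S → ℝ) × ℝ, w.2 * ∑ s, w.1 s * (if s ∈ A then c else 0)
      = c * (w.2 * probOf w.1 A) := by
    intro w; rw [sum_single_ite]; ring
  rcases W.eq_empty_or_nonempty with hE | ⟨w₀, hw₀⟩
  · unfold Ebar ubar; simp [hE]
  · rw [Ebar_eq_sSup_ES]
    apply le_antisymm
    · refine csSup_le ⟨w₀.2 * ∑ s, w₀.1 s * (if s ∈ A then c else 0), ⟨w₀, hw₀, rfl⟩⟩ ?_
      rintro x ⟨w, hw, rfl⟩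
      rw [hval w]
      exact mul_le_mul_of_nonneg_left (le_ubar hT hw A) hc
    · rcases eq_or_lt_of_le hc with h0 | h0
      · rw [← h0, zero_mul]
        exact Real.sSup_nonneg (ES_nonneg hT fun s => by positivity)
      · rw [mul_comm, ← le_div_iff₀ h0]
        unfold ubar
        refine csSup_le ⟨w₀.2 * probOf w₀.1 A, ⟨w₀, hw₀, rfl⟩⟩ ?_
        rintro t ⟨w, hw, rfl⟩
        rw [le_div_iff₀ h0]
        have : w.2 * probOf w.1 A * c = w.2 * ∑ s, w.1 s * (if s ∈ A then c else 0) := by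
          rw [hval w]; ring
        rw [this]
        exact le_csSup (ES_bddAbove hT _) ⟨w, hw, rfl⟩

lemma regretAt_nonneg {M : Finset (S → ℝ)} {f : S → ℝ} (hf : f ∈ M) (s : S) :
    0 ≤ regretAt M f s := by
  have h : f s ≤ sSup ((fun g => g s) '' (M : Set (S → ℝ))) :=
    le_csSup (Set.Finite.bddAbove (M.finite_toSet.image _)) ⟨f, hf, rfl⟩
  simpa [regretAt] using sub_nonneg.mpr h

/-- When `ubar W A` is not positive, all updated weighted regrets vanish. -/
lemma Ebar_updL_null {W : Set ((S → ℝ) × ℝ)} (hT : Tame W) {A : Finset S}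
    (hA : ¬ 0 < ubar W A) (θ : S → ℝ) : Ebar (updL W A) θ = 0 := by
  apply sSup_eq_zero_of_subset_zero
  rintro x ⟨w', ⟨w, hw, hP, rfl⟩, rfl⟩
  have hαl : alphaL W A w.1 = 0 := by
    apply sSup_eq_zero_of_subset_zero
    rintro z ⟨w'', hw'', _, rfl⟩
    have h1 : w''.2 * probOf w''.1 A = 0 :=
      le_antisymm (le_trans (le_ubar hT hw'' A) (not_lt.mp hA))
        (mul_nonneg (hT w'' hw'').1.1 (probOf_nonneg (hT w'' hw'').2.1 A))
    show w''.2 * probOf w''.1 A / ubar W A ∈ ({0} : Set ℝ)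
    simp [h1]
  show alphaL W A w.1 * _ ∈ ({0} : Set ℝ)
  simp [hαl]


lemma Ebar_zero (W' : Set ((S → ℝ) × ℝ)) : Ebar W' (fun _ => (0:ℝ)) = 0 := by
  apply sSup_eq_zero_of_subset_zero
  rintro x ⟨w, hw, rfl⟩
  simp

/-- Dropping a null part of a decomposition `F = A ⊎ B` from a restricted `Ebar`. -/
lemma Ebar_split_drop {W : Set ((S → ℝ) × ℝ)} (hT : Tame W) {A B F : Finset S}
    (hsplit : ∀ s, s ∈ F ↔ s ∈ A ∨ s ∈ B) (hd : ∀ s, ¬(s ∈ A ∧ s ∈ B))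
    (hA0 : ¬ 0 < ubar W A) (ρ : S → ℝ) :
    Ebar W (fun s => if s ∈ F then ρ s else 0) = Ebar W (fun s => if s ∈ B then ρ s else 0) := by
  apply Ebar_congr
  intro w hw
  have hPA : w.2 * probOf w.1 A = 0 :=
    le_antisymm (le_trans (le_ubar hT hw A) (not_lt.mp hA0))
      (mul_nonneg (hT w hw).1.1 (probOf_nonneg (hT w hw).2.1 A))
  have hsum : ∑ s, w.1 s * (if s ∈ F then ρ s else 0)
      = (∑ s, w.1 s * (if s ∈ A then ρ s else 0)) + ∑ s, w.1 s * (if s ∈ B then ρ s else 0) := by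
    rw [← Finset.sum_add_distrib]
    apply Finset.sum_congr rfl
    intro s _
    by_cases h1 : s ∈ A
    · have h2 : s ∉ B := fun h2 => hd s ⟨h1, h2⟩
      have hF : s ∈ F := (hsplit s).mpr (Or.inl h1)
      simp [h1, h2, hF]
    · by_cases h2 : s ∈ B
      · have hF : s ∈ F := (hsplit s).mpr (Or.inr h2)
        simp [h1, h2, hF]
      · have hF : s ∉ F := fun hF => by rcases (hsplit s).mp hF with h | h <;> tauto
        simp [h1, h2, hF]
  have hzero : w.2 * ∑ s, w.1 s * (if s ∈ A then ρ s else 0) = 0 := by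
    rcases mul_eq_zero.mp hPA with hα | hP
    · rw [hα, zero_mul]
    · rw [Finset.sum_eq_zero, mul_zero]
      intro s _
      by_cases hs : s ∈ A
      · rw [probOf_eq_zero_mem (hT w hw).2.1 hP.le hs, zero_mul]
      · simp [hs]
  rw [hsum, mul_add, hzero, zero_add]

lemma sSup_PS_mono {W' : Set ((S → ℝ) × ℝ)} (hTu : Tame W') (hne : W'.Nonempty)
    {A B : Finset S} {c₁ c₂ d₁ d₂ : ℝ} (hd : ∀ s, ¬(s ∈ A ∧ s ∈ B))
    (h1 : c₁ ≤ d₁) (h2 : c₂ ≤ d₂) :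
    sSup (PS W' A B c₁ c₂) ≤ sSup (PS W' A B d₁ d₂) := by
  obtain ⟨w₀, hw₀⟩ := hne
  have hb : BddAbove (PS W' A B d₁ d₂) := by
    rw [PS_eq_ES hd]; exact ES_bddAbove hTu _
  refine csSup_le ⟨w₀.2 * (probOf w₀.1 A * c₁ + probOf w₀.1 B * c₂), ⟨w₀, hw₀, rfl⟩⟩ ?_
  rintro x ⟨w, hw, rfl⟩
  obtain ⟨⟨ha0, _⟩, hq, _⟩ := hTu w hw
  refine le_trans ?_ (le_csSup hb ⟨w, hw, rfl⟩)
  apply mul_le_mul_of_nonneg_left _ ha0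
  exact add_le_add (mul_le_mul_of_nonneg_left h1 (probOf_nonneg hq A))
    (mul_le_mul_of_nonneg_left h2 (probOf_nonneg hq B))

lemma menu_sup_zero {M : Finset (S → ℝ)} (hz : (fun _ => (0:ℝ)) ∈ M)
    (hle : ∀ g ∈ M, ∀ s, g s ≤ 0) (s : S) :
    sSup ((fun g => g s) '' (M : Set (S → ℝ))) = 0 := by
  apply le_antisymm
  · refine csSup_le ⟨0, ⟨(fun _ => 0), Finset.mem_coe.mpr hz, rfl⟩⟩ ?_
    rintro v ⟨g, hg, rfl⟩
    exact hle g (Finset.mem_coe.mp hg) s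
  · exact le_csSup (Set.Finite.bddAbove (M.finite_toSet.image _))
      ⟨(fun _ => 0), Finset.mem_coe.mpr hz, rfl⟩

lemma regretAt_of_sup_zero {M : Finset (S → ℝ)} {f : S → ℝ}
    (h : ∀ s, sSup ((fun g => g s) '' (M : Set (S → ℝ))) = 0) :
    regretAt M f = fun s => -(f s) := by
  funext s
  rw [regretAt, h s, zero_sub]

end Stmt6Aux

/-- Theorem 2, χ = l: if `C(W)` is closed, Axiom DC-M holds for `W`
under likelihood updating iff the weighted regret of every act in every menu is
separable under likelihood updating. -/
theorem stmt_6 [Fintype S] [Nonempty S] [DecidableEq S]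
    (W : Set ((S → ℝ) × ℝ)) (hW : IsWeightedSet W)
    (hclosed : IsClosed (Cset W)) :
    DCM updL W ↔
      ∀ M : Finset (S → ℝ), M.Nonempty → ∀ f ∈ M, Separable updL W M f := by
  classical
  have hT : Tame W := tame_of_weighted hW
  constructor
  · -- DCM → separability
    intro hd M₀ hM₀ f₀ hf₀ E F hA hB
    have hdisj : ∀ s, ¬(s ∈ E ∩ F ∧ s ∈ Eᶜ ∩ F) := by
      rintro s ⟨h1, h2⟩
      exact (Finset.mem_compl.mp (Finset.mem_inter.mp h2).1) (Finset.mem_inter.mp h1).1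
    have hAF : E ∩ F ⊆ F := Finset.inter_subset_right
    have hBF : Eᶜ ∩ F ⊆ F := Finset.inter_subset_right
    have hF : 0 < ubar W F := lt_of_lt_of_le hA (ubar_mono hT hAF)
    have hr : ∀ s, 0 ≤ regretAt M₀ f₀ s := regretAt_nonneg hf₀
    set R₁ := wregret (updL W (E ∩ F)) M₀ f₀ with hR₁def
    set R₂ := wregret (updL W (Eᶜ ∩ F)) M₀ f₀ with hR₂def
    have hR₁ : R₁ = Ebar W (fun s => if s ∈ E ∩ F then regretAt M₀ f₀ s else 0)
        / ubar W (E ∩ F) := by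
      rw [hR₁def, wregret_eq_Ebar, Ebar_updL hT hA hr]
    have hR₂ : R₂ = Ebar W (fun s => if s ∈ Eᶜ ∩ F then regretAt M₀ f₀ s else 0)
        / ubar W (Eᶜ ∩ F) := by
      rw [hR₂def, wregret_eq_Ebar, Ebar_updL hT hB hr]
    have hR₁0 : 0 ≤ R₁ := by
      rw [hR₁]
      refine div_nonneg (Ebar_nonneg hT fun s => ?_) (ubar_nonneg hT _)
      split
      · exact hr s
      · exact le_rfl
    have hR₂0 : 0 ≤ R₂ := by
      rw [hR₂]
      refine div_nonneg (Ebar_nonneg hT fun s => ?_) (ubar_nonneg hT _)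
      split
      · exact hr s
      · exact le_rfl
    set θ : S → ℝ := fun s => if s ∈ E ∩ F then R₁ else if s ∈ Eᶜ ∩ F then R₂ else 0
      with hθdef
    have hθ0 : ∀ s, 0 ≤ θ s := by
      intro s
      rw [hθdef]
      dsimp only
      split
      · exact hR₁0
      · split
        · exact hR₂0
        · exact le_rfl
    have hindAθ : (fun s => if s ∈ E ∩ F then θ s else 0)
        = (fun s => if s ∈ E ∩ F then R₁ else 0) := by
      funext s
      by_cases hs : s ∈ E ∩ F
      · simp only [hθdef, if_pos hs]
      · simp only [if_neg hs]
    have hindBθ : (fun s => if s ∈ Eᶜ ∩ F then θ s else 0)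
        = (fun s => if s ∈ Eᶜ ∩ F then R₂ else 0) := by
      funext s
      by_cases hs : s ∈ Eᶜ ∩ F
      · have hsA : s ∉ E ∩ F := fun h => hdisj s ⟨h, hs⟩
        simp only [hθdef, if_pos hs, if_neg hsA]
      · simp only [if_neg hs]
    have hindFθ : (fun s => if s ∈ F then θ s else 0) = θ := by
      funext s
      by_cases hsF : s ∈ F
      · simp only [if_pos hsF]
      · have h1 : s ∉ E ∩ F := fun h => hsF (Finset.mem_inter.mp h).2
        have h2 : s ∉ Eᶜ ∩ F := fun h => hsF (Finset.mem_inter.mp h).2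
        simp only [hθdef, if_neg hsF, if_neg h1, if_neg h2]
    -- the auxiliary menu
    set x : S → ℝ := fun s => -(regretAt M₀ f₀ s) with hxdef
    set y : S → ℝ := fun s => -(θ s) with hydef
    set z : S → ℝ := fun _ => 0 with hzdef
    set Mh : Finset (S → ℝ) := {x, y, z} with hMhdef
    set M' : Finset (S → ℝ) := {x, y} with hM'def
    have hzMh : z ∈ Mh := by rw [hMhdef]; simp
    have hxMh : x ∈ Mh := by rw [hMhdef]; simp
    have hyMh : y ∈ Mh := by rw [hMhdef]; simp
    have hxM' : x ∈ M' := by rw [hM'def]; simp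
    have hyM' : y ∈ M' := by rw [hM'def]; simp
    have hMhne : Mh.Nonempty := ⟨x, hxMh⟩
    have hsub : M' ⊆ Mh := by
      intro t ht
      rw [hM'def] at ht
      rcases Finset.mem_insert.mp ht with rfl | ht2
      · exact hxMh
      · rw [Finset.mem_singleton.mp ht2]; exact hyMh
    have hM'cases : ∀ t ∈ M', t = x ∨ t = y := by
      intro t ht
      rw [hM'def] at ht
      rcases Finset.mem_insert.mp ht with rfl | ht2
      · exact Or.inl rfl
      · exact Or.inr (Finset.mem_singleton.mp ht2)
    have hsup : ∀ s, sSup ((fun g => g s) '' (Mh : Set (S → ℝ))) = 0 := by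
      apply menu_sup_zero (by rw [hzdef] at hzMh; exact hzMh)
      intro g hg s
      rw [hMhdef] at hg
      rcases Finset.mem_insert.mp hg with rfl | hg2
      · rw [hxdef]; simp [hr s]
      · rcases Finset.mem_insert.mp hg2 with rfl | hg3
        · rw [hydef]; simp [hθ0 s]
        · rw [Finset.mem_singleton.mp hg3, hzdef]
    have hregx : regretAt Mh x = regretAt M₀ f₀ := by
      rw [regretAt_of_sup_zero hsup]
      funext s
      rw [hxdef]
      simp
    have hregy : regretAt Mh y = θ := by
      rw [regretAt_of_sup_zero hsup]
      funext s
      rw [hydef]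
      simp
    -- weighted regrets for the auxiliary menu
    have wAx : wregret (updL W (E ∩ F)) Mh x = R₁ := by
      rw [wregret_eq_Ebar, hregx, Ebar_updL hT hA hr, ← hR₁]
    have wAy : wregret (updL W (E ∩ F)) Mh y = R₁ := by
      rw [wregret_eq_Ebar, hregy, Ebar_updL hT hA hθ0, hindAθ, Ebar_ite hT _ hR₁0]
      exact mul_div_cancel_right₀ _ hA.ne'
    have wBx : wregret (updL W (Eᶜ ∩ F)) Mh x = R₂ := by
      rw [wregret_eq_Ebar, hregx, Ebar_updL hT hB hr, ← hR₂]
    have wBy : wregret (updL W (Eᶜ ∩ F)) Mh y = R₂ := by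
      rw [wregret_eq_Ebar, hregy, Ebar_updL hT hB hθ0, hindBθ, Ebar_ite hT _ hR₂0]
      exact mul_div_cancel_right₀ _ hB.ne'
    have wFx : wregret (updL W F) Mh x
        = Ebar W (fun s => if s ∈ F then regretAt M₀ f₀ s else 0) / ubar W F := by
      rw [wregret_eq_Ebar, hregx, Ebar_updL hT hF hr]
    have wFy : wregret (updL W F) Mh y = Ebar W θ / ubar W F := by
      rw [wregret_eq_Ebar, hregy, Ebar_updL hT hF hθ0, hindFθ]
    have hxA : x ∈ choiceSet Mh (updL W (E ∩ F)) M' := by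
      refine ⟨hxM', fun t ht => ?_⟩
      rcases hM'cases t ht with rfl | rfl
      · exact le_rfl
      · exact le_of_eq (wAx.trans wAy.symm)
    have hxB : x ∈ choiceSet Mh (updL W (Eᶜ ∩ F)) M' := by
      refine ⟨hxM', fun t ht => ?_⟩
      rcases hM'cases t ht with rfl | rfl
      · exact le_rfl
      · exact le_of_eq (wBx.trans wBy.symm)
    have hyA : y ∈ choiceSet Mh (updL W (E ∩ F)) M' := by
      refine ⟨hyM', fun t ht => ?_⟩
      rcases hM'cases t ht with rfl | rfl
      · exact le_of_eq (wAy.trans wAx.symm)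
      · exact le_rfl
    have hyB : y ∈ choiceSet Mh (updL W (Eᶜ ∩ F)) M' := by
      refine ⟨hyM', fun t ht => ?_⟩
      rcases hM'cases t ht with rfl | rfl
      · exact le_of_eq (wBy.trans wBx.symm)
      · exact le_rfl
    have hdx := (hd E F Mh M' hMhne hsub x hxM' y hyM' hxA hxB).1
    have hdy := (hd E F Mh M' hMhne hsub y hyM' x hxM' hyA hyB).1
    have hEq' : wregret (updL W F) Mh x = wregret (updL W F) Mh y :=
      le_antisymm (hdx.2 y hyM') (hdy.2 x hxM')
    have hEq : Ebar W (fun s => if s ∈ F then regretAt M₀ f₀ s else 0) = Ebar W θ := by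
      rw [wFx, wFy] at hEq'
      have h3 := congrArg (· * ubar W F) hEq'
      rwa [div_mul_cancel₀ _ hF.ne', div_mul_cancel₀ _ hF.ne'] at h3
    constructor
    · -- SEP (i)
      have hset : {x' | ∃ w ∈ updL W F, x' =
          w.2 * (probOf w.1 (E ∩ F) * R₁ + probOf w.1 (Eᶜ ∩ F) * R₂)}
          = ES (updL W F) θ := by
        rw [show {x' | ∃ w ∈ updL W F, x' =
            w.2 * (probOf w.1 (E ∩ F) * R₁ + probOf w.1 (Eᶜ ∩ F) * R₂)}
            = PS (updL W F) (E ∩ F) (Eᶜ ∩ F) R₁ R₂ from rfl, PS_eq_ES hdisj, hθdef]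
      rw [hset, ← Ebar_eq_sSup_ES, wregret_eq_Ebar, Ebar_updL hT hF hr, hEq,
        Ebar_updL hT hF hθ0, hindFθ]
    · -- SEP (ii)
      intro hR₁ne
      have hR₁pos : 0 < R₁ := lt_of_le_of_ne hR₁0 (Ne.symm hR₁ne)
      set θf : S → ℝ := fun s => if s ∈ Eᶜ ∩ F then R₂ else 0 with hθfdef
      have hθf0 : ∀ s, 0 ≤ θf s := by
        intro s
        rw [hθfdef]
        dsimp only
        split
        · exact hR₂0
        · exact le_rfl
      have hindAθf : (fun s => if s ∈ E ∩ F then θf s else 0) = (fun _ => (0:ℝ)) := by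
        funext s
        by_cases hs : s ∈ E ∩ F
        · have hsB : s ∉ Eᶜ ∩ F := fun h => hdisj s ⟨hs, h⟩
          simp only [hθfdef, if_pos hs, if_neg hsB]
        · simp only [if_neg hs]
      have hindBθf : (fun s => if s ∈ Eᶜ ∩ F then θf s else 0)
          = (fun s => if s ∈ Eᶜ ∩ F then R₂ else 0) := by
        funext s
        by_cases hs : s ∈ Eᶜ ∩ F
        · simp only [hθfdef, if_pos hs]
        · simp only [if_neg hs]
      have hindFθf : (fun s => if s ∈ F then θf s else 0) = θf := by
        funext s
        by_cases hsF : s ∈ F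
        · simp only [if_pos hsF]
        · have h2 : s ∉ Eᶜ ∩ F := fun h => hsF (Finset.mem_inter.mp h).2
          simp only [hθfdef, if_neg hsF, if_neg h2]
      set x' : S → ℝ := fun s => -(θf s) with hx'def
      set Mh₂ : Finset (S → ℝ) := {x', y, z} with hMh₂def
      set M'' : Finset (S → ℝ) := {x', y} with hM''def
      have hx'Mh₂ : x' ∈ Mh₂ := by rw [hMh₂def]; simp
      have hyMh₂ : y ∈ Mh₂ := by rw [hMh₂def]; simp
      have hzMh₂ : z ∈ Mh₂ := by rw [hMh₂def]; simp
      have hx'M'' : x' ∈ M'' := by rw [hM''def]; simp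
      have hyM'' : y ∈ M'' := by rw [hM''def]; simp
      have hMh₂ne : Mh₂.Nonempty := ⟨x', hx'Mh₂⟩
      have hsub₂ : M'' ⊆ Mh₂ := by
        intro t ht
        rw [hM''def] at ht
        rcases Finset.mem_insert.mp ht with rfl | ht2
        · exact hx'Mh₂
        · rw [Finset.mem_singleton.mp ht2]; exact hyMh₂
      have hM''cases : ∀ t ∈ M'', t = x' ∨ t = y := by
        intro t ht
        rw [hM''def] at ht
        rcases Finset.mem_insert.mp ht with rfl | ht2
        · exact Or.inl rfl
        · exact Or.inr (Finset.mem_singleton.mp ht2)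
      have hsup₂ : ∀ s, sSup ((fun g => g s) '' (Mh₂ : Set (S → ℝ))) = 0 := by
        apply menu_sup_zero (by rw [hzdef] at hzMh₂; exact hzMh₂)
        intro g hg s
        rw [hMh₂def] at hg
        rcases Finset.mem_insert.mp hg with rfl | hg2
        · rw [hx'def]; simp [hθf0 s]
        · rcases Finset.mem_insert.mp hg2 with rfl | hg3
          · rw [hydef]; simp [hθ0 s]
          · rw [Finset.mem_singleton.mp hg3, hzdef]
      have hregx' : regretAt Mh₂ x' = θf := by
        rw [regretAt_of_sup_zero hsup₂]
        funext s
        rw [hx'def]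
        simp
      have hregy₂ : regretAt Mh₂ y = θ := by
        rw [regretAt_of_sup_zero hsup₂]
        funext s
        rw [hydef]
        simp
      have wAx' : wregret (updL W (E ∩ F)) Mh₂ x' = 0 := by
        rw [wregret_eq_Ebar, hregx', Ebar_updL hT hA hθf0, hindAθf, Ebar_zero, zero_div]
      have wAy₂ : wregret (updL W (E ∩ F)) Mh₂ y = R₁ := by
        rw [wregret_eq_Ebar, hregy₂, Ebar_updL hT hA hθ0, hindAθ, Ebar_ite hT _ hR₁0]
        exact mul_div_cancel_right₀ _ hA.ne'
      have wBx' : wregret (updL W (Eᶜ ∩ F)) Mh₂ x' = R₂ := by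
        rw [wregret_eq_Ebar, hregx', Ebar_updL hT hB hθf0, hindBθf, Ebar_ite hT _ hR₂0]
        exact mul_div_cancel_right₀ _ hB.ne'
      have wBy₂ : wregret (updL W (Eᶜ ∩ F)) Mh₂ y = R₂ := by
        rw [wregret_eq_Ebar, hregy₂, Ebar_updL hT hB hθ0, hindBθ, Ebar_ite hT _ hR₂0]
        exact mul_div_cancel_right₀ _ hB.ne'
      have wFx' : wregret (updL W F) Mh₂ x' = Ebar W θf / ubar W F := by
        rw [wregret_eq_Ebar, hregx', Ebar_updL hT hF hθf0, hindFθf]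
      have wFy₂ : wregret (updL W F) Mh₂ y = Ebar W θ / ubar W F := by
        rw [wregret_eq_Ebar, hregy₂, Ebar_updL hT hF hθ0, hindFθ]
      have hx'A : x' ∈ choiceSet Mh₂ (updL W (E ∩ F)) M'' := by
        refine ⟨hx'M'', fun t ht => ?_⟩
        rcases hM''cases t ht with rfl | rfl
        · exact le_rfl
        · rw [wAx', wAy₂]; exact hR₁0
      have hx'B : x' ∈ choiceSet Mh₂ (updL W (Eᶜ ∩ F)) M'' := by
        refine ⟨hx'M'', fun t ht => ?_⟩
        rcases hM''cases t ht with rfl | rfl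
        · exact le_rfl
        · exact le_of_eq (wBx'.trans wBy₂.symm)
      have hyAnot : y ∉ choiceSet Mh₂ (updL W (E ∩ F)) M'' := by
        intro hmem
        have h1 := hmem.2 x' hx'M''
        rw [wAy₂, wAx'] at h1
        exact absurd h1 (not_le.mpr hR₁pos)
      have hdd := (hd E F Mh₂ M'' hMh₂ne hsub₂ x' hx'M'' y hyM'' hx'A hx'B).2 hyAnot
      have hlt : wregret (updL W F) Mh₂ x' < wregret (updL W F) Mh₂ y := by
        by_contra hc
        push_neg at hc
        refine hdd ⟨hyM'', fun t ht => ?_⟩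
        rcases hM''cases t ht with rfl | rfl
        · exact hc
        · exact le_rfl
      have hsetS : {x'' | ∃ w ∈ updL W F, x'' = w.2 * probOf w.1 (Eᶜ ∩ F) * R₂}
          = ES (updL W F) θf := by
        rw [show {x'' | ∃ w ∈ updL W F, x'' = w.2 * probOf w.1 (Eᶜ ∩ F) * R₂}
            = SS (updL W F) (Eᶜ ∩ F) R₂ from rfl, SS_eq_ES, hθfdef]
      rw [hsetS, ← Ebar_eq_sSup_ES, wregret_eq_Ebar, Ebar_updL hT hF hr, hEq]
      rw [wFx', wFy₂] at hlt
      rwa [Ebar_updL hT hF hθf0, hindFθf]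
  · -- separability → DCM
    intro hS E F M M' hMne hM'M f hf g hg hfA hfB
    have hdisj : ∀ s, ¬(s ∈ E ∩ F ∧ s ∈ Eᶜ ∩ F) := by
      rintro s ⟨h1, h2⟩
      exact (Finset.mem_compl.mp (Finset.mem_inter.mp h2).1) (Finset.mem_inter.mp h1).1
    have hAF : E ∩ F ⊆ F := Finset.inter_subset_right
    have hBF : Eᶜ ∩ F ⊆ F := Finset.inter_subset_right
    have hsplit : ∀ s, s ∈ F ↔ s ∈ E ∩ F ∨ s ∈ Eᶜ ∩ F := by
      intro s
      constructor
      · intro hsF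
        by_cases hsE : s ∈ E
        · exact Or.inl (Finset.mem_inter.mpr ⟨hsE, hsF⟩)
        · exact Or.inr (Finset.mem_inter.mpr ⟨Finset.mem_compl.mpr hsE, hsF⟩)
      · rintro (h | h) <;> exact (Finset.mem_inter.mp h).2
    by_cases hA : 0 < ubar W (E ∩ F) <;> by_cases hB : 0 < ubar W (Eᶜ ∩ F)
    · -- main case: both conditional upper probabilities positive
      have hF : 0 < ubar W F := lt_of_lt_of_le hA (ubar_mono hT hAF)
      have hTu : Tame (updL W F) := tame_updL hT F
      have hune : (updL W F).Nonempty := updL_nonempty hT hF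
      have hsep : ∀ h ∈ M', wregret (updL W F) M h =
          sSup (PS (updL W F) (E ∩ F) (Eᶜ ∩ F)
            (wregret (updL W (E ∩ F)) M h) (wregret (updL W (Eᶜ ∩ F)) M h)) :=
        fun h hh => (hS M hMne h (hM'M hh) E F hA hB).1
      refine ⟨⟨hf, fun g' hg' => ?_⟩, fun hgA hgF => ?_⟩
      · rw [hsep f hf, hsep g' hg']
        exact sSup_PS_mono hTu hune hdisj (hfA.2 g' hg') (hfB.2 g' hg')
      · -- clause 2
        have hnot : ∃ h ∈ M',
            wregret (updL W (E ∩ F)) M h < wregret (updL W (E ∩ F)) M g := by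
          by_contra hc
          push_neg at hc
          exact hgA ⟨hg, hc⟩
        obtain ⟨h, hh, hlt⟩ := hnot
        have hR1 : wregret (updL W (E ∩ F)) M f < wregret (updL W (E ∩ F)) M g :=
          lt_of_le_of_lt (hfA.2 h hh) hlt
        have hR1f0 : 0 ≤ wregret (updL W (E ∩ F)) M f := by
          rw [wregret_eq_Ebar]
          exact Ebar_nonneg (tame_updL hT _) (regretAt_nonneg (hM'M hf))
        have hR1g_pos : 0 < wregret (updL W (E ∩ F)) M g := lt_of_le_of_lt hR1f0 hR1
        have hsep2 : sSup (SS (updL W F) (Eᶜ ∩ F) (wregret (updL W (Eᶜ ∩ F)) M g)) <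
            wregret (updL W F) M g :=
          (hS M hMne g (hM'M hg) E F hA hB).2 hR1g_pos.ne'
        have hb2 : wregret (updL W (Eᶜ ∩ F)) M f ≤ wregret (updL W (Eᶜ ∩ F)) M g :=
          hfB.2 g hg
        have hmain : wregret (updL W F) M f < wregret (updL W F) M g := by
          set a₁ := wregret (updL W (E ∩ F)) M f
          set a₂ := wregret (updL W (E ∩ F)) M g
          set b₁ := wregret (updL W (Eᶜ ∩ F)) M f
          set b₂ := wregret (updL W (Eᶜ ∩ F)) M g
          set lam := a₁ / a₂ with hlamdef
          have hlam0 : 0 ≤ lam := div_nonneg hR1f0 hR1g_pos.le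
          have hlam1 : lam < 1 := (div_lt_one hR1g_pos).mpr hR1
          have hbPS : BddAbove (PS (updL W F) (E ∩ F) (Eᶜ ∩ F) a₂ b₂) := by
            rw [PS_eq_ES hdisj]; exact ES_bddAbove hTu _
          have hbSS : BddAbove (SS (updL W F) (Eᶜ ∩ F) b₂) := by
            rw [SS_eq_ES]; exact ES_bddAbove hTu _
          have hkey : ∀ x ∈ PS (updL W F) (E ∩ F) (Eᶜ ∩ F) a₁ b₁,
              x ≤ lam * sSup (PS (updL W F) (E ∩ F) (Eᶜ ∩ F) a₂ b₂)
                + (1 - lam) * sSup (SS (updL W F) (Eᶜ ∩ F) b₂) := by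
            rintro x ⟨w, hw, rfl⟩
            obtain ⟨⟨hw0, _⟩, hwq, _⟩ := hTu w hw
            have ha₁lam : a₁ = lam * a₂ := by
              rw [hlamdef, div_mul_cancel₀ _ hR1g_pos.ne']
            calc w.2 * (probOf w.1 (E ∩ F) * a₁ + probOf w.1 (Eᶜ ∩ F) * b₁)
                ≤ w.2 * (probOf w.1 (E ∩ F) * a₁ + probOf w.1 (Eᶜ ∩ F) * b₂) := by
                  apply mul_le_mul_of_nonneg_left _ hw0
                  exact add_le_add le_rfl
                    (mul_le_mul_of_nonneg_left hb2 (probOf_nonneg hwq _))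
              _ = lam * (w.2 * (probOf w.1 (E ∩ F) * a₂ + probOf w.1 (Eᶜ ∩ F) * b₂))
                    + (1 - lam) * (w.2 * probOf w.1 (Eᶜ ∩ F) * b₂) := by
                  rw [ha₁lam]; ring
              _ ≤ lam * sSup (PS (updL W F) (E ∩ F) (Eᶜ ∩ F) a₂ b₂)
                    + (1 - lam) * sSup (SS (updL W F) (Eᶜ ∩ F) b₂) := by
                  exact add_le_add
                    (mul_le_mul_of_nonneg_left (le_csSup hbPS ⟨w, hw, rfl⟩) hlam0)
                    (mul_le_mul_of_nonneg_left (le_csSup hbSS ⟨w, hw, rfl⟩)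
                      (by linarith))
          obtain ⟨w₀, hw₀⟩ := hune
          have h4 : sSup (PS (updL W F) (E ∩ F) (Eᶜ ∩ F) a₁ b₁)
              ≤ lam * sSup (PS (updL W F) (E ∩ F) (Eᶜ ∩ F) a₂ b₂)
                + (1 - lam) * sSup (SS (updL W F) (Eᶜ ∩ F) b₂) :=
            csSup_le ⟨w₀.2 * (probOf w₀.1 (E ∩ F) * a₁ + probOf w₀.1 (Eᶜ ∩ F) * b₁),
              ⟨w₀, hw₀, rfl⟩⟩ hkey
          have hN' : sSup (SS (updL W F) (Eᶜ ∩ F) b₂) <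
              sSup (PS (updL W F) (E ∩ F) (Eᶜ ∩ F) a₂ b₂) := by
            have := hsep2
            rwa [hsep g hg] at this
          have hml := mul_lt_mul_of_pos_left hN' (show (0:ℝ) < 1 - lam by linarith)
          have hid : lam * sSup (PS (updL W F) (E ∩ F) (Eᶜ ∩ F) a₂ b₂)
              + (1 - lam) * sSup (PS (updL W F) (E ∩ F) (Eᶜ ∩ F) a₂ b₂)
              = sSup (PS (updL W F) (E ∩ F) (Eᶜ ∩ F) a₂ b₂) := by ring
          rw [hsep f hf, hsep g hg]
          linarith
        exact absurd (hgF.2 f hf) (not_le.mpr hmain)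
    · -- ubar (E∩F) > 0, ubar (Eᶜ∩F) ≤ 0
      have hF : 0 < ubar W F := lt_of_lt_of_le hA (ubar_mono hT hAF)
      have hsplit' : ∀ s, s ∈ F ↔ s ∈ Eᶜ ∩ F ∨ s ∈ E ∩ F := by
        intro s; rw [hsplit s]; exact or_comm
      have hdisj' : ∀ s, ¬(s ∈ Eᶜ ∩ F ∧ s ∈ E ∩ F) := fun s h => hdisj s ⟨h.2, h.1⟩
      have key : ∀ h ∈ M', wregret (updL W F) M h
          = wregret (updL W (E ∩ F)) M h * (ubar W (E ∩ F) / ubar W F) := by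
        intro h hh
        have hrn := regretAt_nonneg (hM'M hh)
        rw [wregret_eq_Ebar, wregret_eq_Ebar, Ebar_updL hT hF hrn, Ebar_updL hT hA hrn,
          Ebar_split_drop hT hsplit' hdisj' hB (regretAt M h)]
        rw [div_mul_div_comm, mul_comm (Ebar W fun s => if s ∈ E ∩ F then regretAt M h s else 0)
          (ubar W (E ∩ F)), mul_div_mul_left _ _ hA.ne']
      refine ⟨⟨hf, fun g' hg' => ?_⟩, fun hgA hgF => ?_⟩
      · rw [key f hf, key g' hg']
        exact mul_le_mul_of_nonneg_right (hfA.2 g' hg')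
          (div_nonneg (ubar_nonneg hT _) (ubar_nonneg hT _))
      · have hnot : ∃ h ∈ M',
            wregret (updL W (E ∩ F)) M h < wregret (updL W (E ∩ F)) M g := by
          by_contra hc
          push_neg at hc
          exact hgA ⟨hg, hc⟩
        obtain ⟨h, hh, hlt⟩ := hnot
        have h1 := hgF.2 h hh
        rw [key g hg, key h hh] at h1
        exact absurd (le_of_mul_le_mul_right h1 (div_pos hA hF)) (not_le.mpr hlt)
    · -- ubar (E∩F) ≤ 0, ubar (Eᶜ∩F) > 0
      have hF : 0 < ubar W F := lt_of_lt_of_le hB (ubar_mono hT hBF)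
      have key : ∀ h ∈ M', wregret (updL W F) M h
          = wregret (updL W (Eᶜ ∩ F)) M h * (ubar W (Eᶜ ∩ F) / ubar W F) := by
        intro h hh
        have hrn := regretAt_nonneg (hM'M hh)
        rw [wregret_eq_Ebar, wregret_eq_Ebar, Ebar_updL hT hF hrn, Ebar_updL hT hB hrn,
          Ebar_split_drop hT hsplit hdisj hA (regretAt M h)]
        rw [div_mul_div_comm, mul_comm (Ebar W fun s => if s ∈ Eᶜ ∩ F then regretAt M h s else 0)
          (ubar W (Eᶜ ∩ F)), mul_div_mul_left _ _ hB.ne']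
      refine ⟨⟨hf, fun g' hg' => ?_⟩, fun hgA _ => ?_⟩
      · rw [key f hf, key g' hg']
        exact mul_le_mul_of_nonneg_right (hfB.2 g' hg')
          (div_nonneg (ubar_nonneg hT _) (ubar_nonneg hT _))
      · have hz : ∀ h : S → ℝ, wregret (updL W (E ∩ F)) M h = 0 := fun h => by
          rw [wregret_eq_Ebar, Ebar_updL_null hT hA]
        exact absurd ⟨hg, fun h hh => le_of_eq (by rw [hz g, hz h])⟩ hgA
    · -- both conditional upper probabilities vanish
      have hz : ∀ h : S → ℝ, wregret (updL W (E ∩ F)) M h = 0 := fun h => by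
        rw [wregret_eq_Ebar, Ebar_updL_null hT hA]
      refine ⟨⟨hf, fun g' hg' => ?_⟩, fun hgA _ => ?_⟩
      · by_cases hF : 0 < ubar W F
        · have hsplit₂ : ∀ s, s ∈ Eᶜ ∩ F ↔ s ∈ Eᶜ ∩ F ∨ s ∈ (∅ : Finset S) := by
            intro s; simp
          have hdisj₂ : ∀ s, ¬(s ∈ Eᶜ ∩ F ∧ s ∈ (∅ : Finset S)) := by
            intro s h; simp at h
          have key : ∀ h ∈ M', wregret (updL W F) M h = 0 := by
            intro h hh
            have hrn := regretAt_nonneg (hM'M hh)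
            rw [wregret_eq_Ebar, Ebar_updL hT hF hrn,
              Ebar_split_drop hT hsplit hdisj hA (regretAt M h),
              Ebar_split_drop hT hsplit₂ hdisj₂ hB (regretAt M h)]
            have hfun : (fun s => if s ∈ (∅ : Finset S) then regretAt M h s else 0)
                = (fun _ => (0:ℝ)) := by
              funext s; simp
            rw [hfun, Ebar_zero, zero_div]
          rw [key f hf, key g' hg']
        · have key0 : ∀ h : S → ℝ, wregret (updL W F) M h = 0 := fun h => by
            rw [wregret_eq_Ebar, Ebar_updL_null hT hF]
          rw [key0 f, key0 g']
      · exact absurd ⟨hg, fun h hh => le_of_eq (by rw [hz g, hz h])⟩ hgA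
end
end

section
/- Minimax expected regret violates the Conditional Weak Comparative Probability axiom (P4ᶜ): let S = {s₁,s₂,s₃}, let p₁, p₂, p₃ be the probability measures with p₁ = (0.25, 0.75, 0), p₂ = (0, 0, 1), p₃ = (0.25, 0, 0.75), and P = {p₁,p₂,p₃}. Let g be the act (20, 23, 5), let c_k denote the constant act with value k, and let the menu be M = {c₁, c₇, c₁₀, c₂₀, g}. For T = {s₁,s₂}, A = {s₁}, B = {s₂}, x ∈ ℝ, and acts written coordinatewise, define R(h) = max_{p∈P} Σ_{s∈S} p(s)·regret_M(h,s). Then: R((10,10,5)) = 15 < 15.25 = R((7,7,5)); R((20,20,5)) = 15 < 21.25 = R((1,1,5)); R((10,7,5)) = 15 = R((7,10,5)); and R((20,1,5)) = 16.5 > 16 = R((1,20,5)). Consequently, the preference relation ⪰ on acts defined by h ⪰ h′ iff R(h) ≤ R(h′) satisfies (10,10,5) ≻ (7,7,5), (20,20,5) ≻ (1,1,5), and (10,7,5) ⪰ (7,10,5), yet (20,1,5) ⋡ (1,20,5), so P4ᶜ fails (with w = 10, x = 7, z = 20, y = 1, where the act (w A x)Tg gives w on A, x on T∖A, and agrees with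 g off T). -/
open scoped BigOperators

noncomputable section

variable {S : Type*}

/-- The probability measure `p₁ = (0.25, 0.75, 0)`. -/
def pa : Fin 3 → ℝ := ![0.25, 0.75, 0]

/-- The probability measure `p₂ = (0, 0, 1)`. -/
def pb : Fin 3 → ℝ := ![0, 0, 1]

/-- The probability measure `p₃ = (0.25, 0, 0.75)`. -/
def pc : Fin 3 → ℝ := ![0.25, 0, 0.75]

/-- The act `g = (20, 23, 5)`. -/
def gAct : Fin 3 → ℝ := ![20, 23, 5]

/-- The constant act with value `k`. -/
def cAct (k : ℝ) : Fin 3 → ℝ := fun _ => k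

/-- The menu `M = {c₁, c₇, c₁₀, c₂₀, g}`. -/
noncomputable def menu16 : Finset (Fin 3 → ℝ) :=
  {cAct 1, cAct 7, cAct 10, cAct 20, gAct}

/-- `R(h) = max_{p ∈ {p₁,p₂,p₃}} Σ_s p(s)·regret_M(h,s)`. -/
noncomputable def R16 (h : Fin 3 → ℝ) : ℝ :=
  max (∑ s, pa s * regretAt menu16 h s)
    (max (∑ s, pb s * regretAt menu16 h s) (∑ s, pc s * regretAt menu16 h s))

/-!
The best outcomes available from the menu in the three states are `20`, `23` and `20`, so
the regret of `(a, b, c)` is `(20 - a, 23 - b, 20 - c)` and `R` is the maximum of three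
explicit affine functions of `(a, b, c)`; every claim is then arithmetic.
-/

theorem regretAt_eq_sup' {M : Finset (S → ℝ)} (hM : M.Nonempty) (f : S → ℝ) (s : S) :
    regretAt M f s = M.sup' hM (fun g => g s) - f s := by
  rw [regretAt, Finset.sup'_eq_csSup_image]

theorem menu16_nonempty : menu16.Nonempty := Finset.insert_nonempty _ _

theorem menu16_sup'_apply (s : Fin 3) :
    menu16.sup' menu16_nonempty (fun g => g s) = ![20, 23, 20] s := by
  fin_cases s <;> norm_num [menu16, cAct, gAct]

theorem regretAt_menu16 (h : Fin 3 → ℝ) (s : Fin 3) :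
    regretAt menu16 h s = ![20, 23, 20] s - h s := by
  rw [regretAt_eq_sup' menu16_nonempty, menu16_sup'_apply]

theorem R16_eq (a b c : ℝ) :
    R16 ![a, b, c] = max (0.25 * (20 - a) + 0.75 * (23 - b))
      (max (20 - c) (0.25 * (20 - a) + 0.75 * (20 - c))) := by
  simp only [R16, regretAt_menu16, Fin.sum_univ_three, pa, pb, pc]
  norm_num [Matrix.cons_val_two]

/-- MER violates the Conditional Weak Comparative Probability axiom
(P4ᶜ): the stated maximum-expected-regret values hold, and consequently
`(10,10,5) ≻ (7,7,5)`, `(20,20,5) ≻ (1,1,5)`, `(10,7,5) ⪰ (7,10,5)`, yet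
`(20,1,5) ⋡ (1,20,5)` (where `h ⪰ h′` iff `R(h) ≤ R(h′)`). -/
theorem stmt_16 :
    R16 ![10, 10, 5] = 15 ∧
    R16 ![7, 7, 5] = 15.25 ∧
    R16 ![20, 20, 5] = 15 ∧
    R16 ![1, 1, 5] = 21.25 ∧
    R16 ![10, 7, 5] = 15 ∧
    R16 ![7, 10, 5] = 15 ∧
    R16 ![20, 1, 5] = 16.5 ∧
    R16 ![1, 20, 5] = 16 ∧
    R16 ![10, 10, 5] < R16 ![7, 7, 5] ∧
    R16 ![20, 20, 5] < R16 ![1, 1, 5] ∧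
    R16 ![10, 7, 5] ≤ R16 ![7, 10, 5] ∧
    ¬ (R16 ![20, 1, 5] ≤ R16 ![1, 20, 5]) := by
  have h₁ : R16 ![10, 10, 5] = 15 := by norm_num [R16_eq]
  have h₂ : R16 ![7, 7, 5] = 15.25 := by norm_num [R16_eq]
  have h₃ : R16 ![20, 20, 5] = 15 := by norm_num [R16_eq]
  have h₄ : R16 ![1, 1, 5] = 21.25 := by norm_num [R16_eq]
  have h₅ : R16 ![10, 7, 5] = 15 := by norm_num [R16_eq]
  have h₆ : R16 ![7, 10, 5] = 15 := by norm_num [R16_eq]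
  have h₇ : R16 ![20, 1, 5] = 16.5 := by norm_num [R16_eq]
  have h₈ : R16 ![1, 20, 5] = 16 := by norm_num [R16_eq]
  refine ⟨h₁, h₂, h₃, h₄, h₅, h₆, h₇, h₈, ?_, ?_, ?_, ?_⟩ <;>
    norm_num [h₁, h₂, h₃, h₄, h₅, h₆, h₇, h₈]
end
end

section
/- No procrastination under minimax regret with forgone opportunities (Example 1): let p₁, p₂, g₁, g₂ be real numbers with p₁ > 0, 2p₁ + p₂ > g₁ > p₁ + p₂, and 2p₂ > g₂ > p₂. Let S = {hard, easy} and define the acts (written as utility pairs (value at hard, value at easy)): studyStudy = (g₁, 0), playStudy = (p₁, p₁), playPlay = (p₁+p₂−g₂, p₁+p₂), and let M = {studyStudy, playStudy, playPlay}. If on day 2 regrets are computed with respect to the full menu M (the forgone opportunity studyStudy included) while the feasible set is M′ = {playStudy, playPlay}, then max_{s∈S} regret_M(playStudy,s) = g₁ − p₁ < g₁ + g₂ − p₁ − p₂ = max_{s∈S} regret_M(playPlay,s), so studying (playStudy) is the unique minimax-regret choice from M′ on the second day. -/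
open scoped BigOperators

noncomputable section

variable {S : Type*}

/-- The plan "study both days": utility `g₁` if the exam is hard, `0` if easy
(`true` = hard, `false` = easy). -/
def studyStudy (g1 : ℝ) : Bool → ℝ := fun s => if s then g1 else 0

/-- The plan "play then study": utility `p₁` in both states. -/
def playStudy (p1 : ℝ) : Bool → ℝ := fun _ => p1

/-- The plan "play both days": utility `p₁+p₂−g₂` if hard, `p₁+p₂` if easy. -/
def playPlay (p1 p2 g2 : ℝ) : Bool → ℝ := fun s => if s then p1 + p2 - g2 else p1 + p2

/-- The full (initial) menu `M = {studyStudy, playStudy, playPlay}`. -/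
noncomputable def fullMenu (p1 p2 g1 g2 : ℝ) : Finset (Bool → ℝ) :=
  {studyStudy g1, playStudy p1, playPlay p1 p2 g2}

/-- The worst-case regret `max_{s ∈ S} regret_M(f,s)` over the two states. -/
noncomputable def mreg (M : Finset (Bool → ℝ)) (f : Bool → ℝ) : ℝ :=
  max (regretAt M f true) (regretAt M f false)


lemma sSup_triple (a b c : ℝ) : sSup ({a, b, c} : Set ℝ) = max a (max b c) := by
  have h1 : BddAbove ({b, c} : Set ℝ) := (Set.toFinite _).bddAbove
  rw [csSup_insert h1 ⟨b, by simp⟩, csSup_pair]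

lemma image_eval (p1 p2 g1 g2 : ℝ) (s : Bool) :
    ((fun g => g s) '' ((fullMenu p1 p2 g1 g2 : Finset (Bool → ℝ)) : Set (Bool → ℝ))) =
      {studyStudy g1 s, playStudy p1 s, playPlay p1 p2 g2 s} := by
  simp [fullMenu, Set.image_insert_eq]

/-- no procrastination under minimax regret with forgone opportunities
(Example 1): if on day 2 regrets are computed with respect to the full menu `M`
(including the forgone opportunity `studyStudy`) while only
`M′ = {playStudy, playPlay}` is feasible, then `playStudy` is the unique
minimax-regret choice from `M′`. -/
theorem stmt_18 (p1 p2 g1 g2 : ℝ) (hp1 : 0 < p1)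
    (hg1a : g1 < 2 * p1 + p2) (hg1b : p1 + p2 < g1)
    (hg2a : g2 < 2 * p2) (hg2b : p2 < g2) :
    mreg (fullMenu p1 p2 g1 g2) (playStudy p1) = g1 - p1 ∧
    mreg (fullMenu p1 p2 g1 g2) (playPlay p1 p2 g2) = g1 + g2 - p1 - p2 ∧
    g1 - p1 < g1 + g2 - p1 - p2 ∧
    ∀ h ∈ ({playStudy p1, playPlay p1 p2 g2} : Finset (Bool → ℝ)), h ≠ playStudy p1 →
      mreg (fullMenu p1 p2 g1 g2) (playStudy p1) < mreg (fullMenu p1 p2 g1 g2) h := by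
  have hp2 : 0 < p2 := by linarith
  have hsupT : sSup ((fun g => g true) '' ((fullMenu p1 p2 g1 g2 : Finset (Bool → ℝ)) : Set (Bool → ℝ))) = g1 := by
    rw [image_eval, sSup_triple]
    simp only [studyStudy, playStudy, playPlay]
    norm_num
    constructor <;> linarith
  have hsupF : sSup ((fun g => g false) '' ((fullMenu p1 p2 g1 g2 : Finset (Bool → ℝ)) : Set (Bool → ℝ))) = p1 + p2 := by
    rw [image_eval, sSup_triple]
    simp only [studyStudy, playStudy, playPlay]
    norm_num
    rw [show p1 ⊔ (p1 + p2) = p1 + p2 from max_eq_right (by linarith),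
      max_eq_right (by linarith)]
  have h1 : mreg (fullMenu p1 p2 g1 g2) (playStudy p1) = g1 - p1 := by
    unfold mreg regretAt
    rw [hsupT, hsupF]
    simp only [playStudy]
    rw [max_eq_left (by linarith)]
  have h2 : mreg (fullMenu p1 p2 g1 g2) (playPlay p1 p2 g2) = g1 + g2 - p1 - p2 := by
    unfold mreg regretAt
    rw [hsupT, hsupF]
    simp only [playPlay]
    norm_num
    rw [max_eq_left (by linarith)]
    ring
  have h3 : g1 - p1 < g1 + g2 - p1 - p2 := by linarith
  refine ⟨h1, h2, h3, ?_⟩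
  intro h hh hne
  simp only [Finset.mem_insert, Finset.mem_singleton] at hh
  rcases hh with rfl | rfl
  · exact absurd rfl hne
  · rw [h1, h2]; linarith
end
end
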